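/- arXiv:2407.11556 — 2 statements merged into one kernel-verified Lean document; each statement's English description precedes it below -/
import Mathlib

section
/- Let n_P > 0 and d ≥ 0 be real (or natural) numbers, and let n_Pc, d_c be numbers with 0 ≤ n_Pc ≤ n_P and 0 ≤ d_c ≤ d. Then |(n_Pc + d_c)/(n_P + d) - n_Pc/n_P| ≤ 1/(n_P/d + 1) = d/(n_P + d) (when d > 0; the bound is 0 when d = 0). -/
/-! The error equals `d / (nP + d)` times `dc / d - nPc / nP`, a difference of two frequencies in
`[0, 1]`. Cross-multiplied, so that `d = 0` needs no separate case, this says that `dc * nP` and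
`nPc * d` both lie in `[0, d * nP]`. -/

theorem add_div_add_sub_div {K : Type*} [Field K] {a b m n : K} (hm : m ≠ 0) (hmn : m + n ≠ 0) :
    (a + b) / (m + n) - a / m = (b * m - a * n) / ((m + n) * m) := by
  rw [div_sub_div _ _ hmn hm]
  ring_nf

theorem abs_mul_sub_mul_le {K : Type*} [Field K] [LinearOrder K] [IsStrictOrderedRing K]
    {a b m n : K} (ha₀ : 0 ≤ a) (ha : a ≤ m) (hb₀ : 0 ≤ b) (hb : b ≤ n) :
    |b * m - a * n| ≤ n * m := by
  have hn : 0 ≤ n := hb₀.trans hb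
  have hm : 0 ≤ m := ha₀.trans ha
  refine abs_sub_le_of_nonneg_of_le (mul_nonneg hb₀ hm) ?_ (mul_nonneg ha₀ hn) ?_
  · exact mul_le_mul_of_nonneg_right hb hm
  · rw [mul_comm n]
    exact mul_le_mul_of_nonneg_right ha hn

theorem abs_add_div_add_sub_div_le {K : Type*} [Field K] [LinearOrder K]
    [IsStrictOrderedRing K] {a b m n : K} (hm : 0 < m) (ha₀ : 0 ≤ a) (ha : a ≤ m)
    (hb₀ : 0 ≤ b) (hb : b ≤ n) :
    |(a + b) / (m + n) - a / m| ≤ n / (m + n) := by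
  have hmn : 0 < m + n := add_pos_of_pos_of_nonneg hm (hb₀.trans hb)
  calc |(a + b) / (m + n) - a / m|
      = |b * m - a * n| / ((m + n) * m) := by
        rw [add_div_add_sub_div hm.ne' hmn.ne', abs_div, abs_of_pos (mul_pos hmn hm)]
    _ ≤ n * m / ((m + n) * m) := by gcongr; exact abs_mul_sub_mul_le ha₀ ha hb₀ hb
    _ = n / (m + n) := mul_div_mul_right n (m + n) hm.ne'

theorem div_add_eq_one_div_div_add_one {K : Type*} [DivisionRing K] {m n : K} (hn : n ≠ 0) :
    n / (m + n) = 1 / (m / n + 1) := by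
  rw [div_add_one hn, one_div_div]

theorem hpt_accuracy_general (nP nPc d dc : ℝ) (hnP : 0 < nP)
    (hnPc0 : 0 ≤ nPc) (hnPc : nPc ≤ nP) (hdc0 : 0 ≤ dc) (hdc : dc ≤ d) :
    |(nPc + dc) / (nP + d) - nPc / nP| ≤ d / (nP + d) ∧
      (0 < d → d / (nP + d) = 1 / (nP / d + 1)) :=
  ⟨abs_add_div_add_sub_div_le hnP hnPc0 hnPc hdc0 hdc,
    fun hd => div_add_eq_one_div_div_add_one hd.ne'⟩

/-- HPT accuracy theorem (Theorem 1): the absolute error between the HPT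
estimate `(n_Pc + d_c)/(n_P + d)` and the true conditional probability
`n_Pc/n_P` is at most `d/(n_P + d)` (which equals `1/(n_P/d + 1)` when
`d > 0`, and is `0` when `d = 0`). -/
theorem hpt_accuracy (nP nPc d dc : ℝ) (hnP : 0 < nP) (hd : 0 ≤ d)
    (hnPc0 : 0 ≤ nPc) (hnPc : nPc ≤ nP) (hdc0 : 0 ≤ dc) (hdc : dc ≤ d) :
    |(nPc + dc) / (nP + d) - nPc / nP| ≤ d / (nP + d) ∧
      (0 < d → d / (nP + d) = 1 / (nP / d + 1)) :=
  hpt_accuracy_general nP nPc d dc hnP hnPc0 hnPc hdc0 hdc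
end

section
/- Let S = s_0 s_1 ... s_n be a string over a finite alphabet, drawn from a probability distribution on strings. Define cdf(P_0) = 0 and cdf(P_{k+1}) = cdf(P_k) + prob(P_k) · Σ_{c=0}^{s_{k+1}-1} prob(c | P_k), where P_k = s_0...s_k, prob(P_k) is the probability that a random string has prefix P_k, and prob(c|P_k) is the conditional probability that character c follows prefix P_k. Then cdf(P_n) equals the probability that a random string is lexicographically strictly less than S at some position ≤ n, i.e., the CDF of S under lexicographic order restricted to the first n characters. -/
/-!
The event "lexicographically below `S` within the first `k + 1` characters" is the disjoint
union of the same event for `k` characters and the event "agrees with `S` before position `k`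
and has a smaller character at `k`"; the latter splits over that character `c < S k`. Since
`prob k · condprob k c` is just the mass of the cylinder `S₀ … S_{k-1} c`, each step of the
recursion adds exactly the mass of the new piece.
-/

open MeasureTheory

namespace LexCDF

variable {α : Type*}

def prefixCylinder (S : ℕ → α) (k : ℕ) : Set (ℕ → α) := {t | ∀ i < k, t i = S i}

def lexLtBefore [LT α] (S : ℕ → α) (n : ℕ) : Set (ℕ → α) :=
  {t | ∃ j < n, t ∈ prefixCylinder S j ∧ t j < S j}

@[simp]
theorem lexLtBefore_zero [LT α] (S : ℕ → α) : lexLtBefore S 0 = ∅ := by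
  simp [lexLtBefore]

theorem lexLtBefore_succ [LT α] (S : ℕ → α) (k : ℕ) :
    lexLtBefore S (k + 1) = lexLtBefore S k ∪ (prefixCylinder S k ∩ {t | t k < S k}) := by
  ext t
  simp only [lexLtBefore, Set.mem_ofPred_eq, Set.mem_union, Set.mem_inter_iff,
    Nat.lt_succ_iff_lt_or_eq, or_and_right, exists_or, exists_eq_left]

theorem disjoint_lexLtBefore_prefixCylinder [Preorder α] (S : ℕ → α) (k : ℕ) :
    Disjoint (lexLtBefore S k) (prefixCylinder S k) := by
  rw [Set.disjoint_left]
  rintro t ⟨j, hj, -, hlt⟩ hagree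
  exact hlt.ne (hagree j hj)

theorem prefixCylinder_inter_lt_eq_biUnion [LinearOrder α] [Fintype α] (S : ℕ → α) (k : ℕ) :
    prefixCylinder S k ∩ {t | t k < S k} =
      ⋃ c ∈ Finset.univ.filter (· < S k), prefixCylinder S k ∩ {t | t k = c} := by
  ext t
  simp

variable [MeasurableSpace α] [MeasurableSingletonClass α]

theorem measurableSet_prefixCylinder (S : ℕ → α) (k : ℕ) :
    MeasurableSet (prefixCylinder S k) := by
  simp only [prefixCylinder, Set.ofPred_forall]
  exact .iInter fun i => .iInter fun _ => measurable_pi_apply i (measurableSet_singleton _)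

theorem measurableSet_setOf_apply [Countable α] (k : ℕ) (p : α → Prop) :
    MeasurableSet {t : ℕ → α | p (t k)} :=
  measurable_pi_apply k (Set.to_countable {c | p c}).measurableSet

theorem measureReal_lexLtBefore_succ [LinearOrder α] [Fintype α] (μ : Measure (ℕ → α))
    [IsFiniteMeasure μ] (S : ℕ → α) (k : ℕ) :
    μ.real (lexLtBefore S (k + 1)) = μ.real (lexLtBefore S k) +
      ∑ c ∈ Finset.univ.filter (· < S k), μ.real (prefixCylinder S k ∩ {t | t k = c}) := by
  have hdisj : Disjoint (lexLtBefore S k) (prefixCylinder S k ∩ {t | t k < S k}) :=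
    (disjoint_lexLtBefore_prefixCylinder S k).mono_right Set.inter_subset_left
  rw [lexLtBefore_succ, measureReal_union hdisj
      ((measurableSet_prefixCylinder S k).inter (measurableSet_setOf_apply k (· < S k))),
    prefixCylinder_inter_lt_eq_biUnion, measureReal_biUnion_finset]
  · intro c _ c' _ hne
    exact Set.disjoint_left.2 fun t ⟨_, hc⟩ ⟨_, hc'⟩ => hne (hc.symm.trans hc')
  · exact fun c _ => (measurableSet_prefixCylinder S k).inter (measurableSet_setOf_apply k (· = c))

end LexCDF

open LexCDF in
theorem cdf_recursion_general (n : ℕ) (S : ℕ → Fin 256)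
    (μ : Measure (ℕ → Fin 256)) [IsProbabilityMeasure μ]
    (prob : ℕ → ℝ) (condprob : ℕ → Fin 256 → ℝ) (cdf : ℕ → ℝ)
    (hcond : ∀ k c, condprob k c =
      (μ {t | (∀ i < k, t i = S i) ∧ t k = c}).toReal / prob k)
    (hpos : ∀ k ≤ n, prob k ≠ 0)
    (hcdf0 : cdf 0 = 0)
    (hcdfS : ∀ k, cdf (k + 1) = cdf k +
      prob k * ∑ c ∈ Finset.univ.filter (fun c : Fin 256 => c < S k), condprob k c) :
    cdf n = (μ {t | ∃ j < n, (∀ i < j, t i = S i) ∧ t j < S j}).toReal := by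
  suffices h : ∀ m ≤ n, cdf m = μ.real (lexLtBefore S m) from h n le_rfl
  intro m hm
  induction m with
  | zero => simp [hcdf0]
  | succ k ih =>
    rw [hcdfS, ih (by omega), measureReal_lexLtBefore_succ, Finset.mul_sum]
    congr 1
    refine Finset.sum_congr rfl fun c _ => ?_
    rw [hcond, mul_div_cancel₀ _ (hpos k (by omega))]
    rfl

/-- Recursive CDF formula (Eqn 1): with `prob k` the probability that a random
(infinite) string agrees with `S` on its first `k` characters, and
`condprob k c` the conditional probability that character `c` follows that
prefix, the recursion `cdf 0 = 0`,
`cdf (k+1) = cdf k + prob k · Σ_{c < s_{k+1}} condprob k c`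
computes the probability that a random string is lexicographically strictly
less than `S` at some position `< n`. -/
theorem cdf_recursion (n : ℕ) (S : ℕ → Fin 256)
    (μ : Measure (ℕ → Fin 256)) [IsProbabilityMeasure μ]
    (prob : ℕ → ℝ) (condprob : ℕ → Fin 256 → ℝ) (cdf : ℕ → ℝ)
    (hprob : ∀ k, prob k = (μ {t | ∀ i < k, t i = S i}).toReal)
    (hcond : ∀ k c, condprob k c =
      (μ {t | (∀ i < k, t i = S i) ∧ t k = c}).toReal / prob k)
    (hpos : ∀ k ≤ n, prob k ≠ 0)
    (hcdf0 : cdf 0 = 0)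
    (hcdfS : ∀ k, cdf (k + 1) = cdf k +
      prob k * ∑ c ∈ Finset.univ.filter (fun c : Fin 256 => c < S k), condprob k c) :
    cdf n = (μ {t | ∃ j < n, (∀ i < j, t i = S i) ∧ t j < S j}).toReal :=
  cdf_recursion_general n S μ prob condprob cdf hcond hpos hcdf0 hcdfS
end
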